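/- arXiv:2112.09897 — 3 statements merged into one kernel-verified Lean document; each statement's English description precedes it below -/
import Mathlib

section
/- Let m ≥ 2, k ≥ 0, c ≥ 0, χ ∈ ℝ, let Y_k be a nonzero solid inner spherical monogenic of degree k on ℝ^m, let F ∈ C²([0,1]), and set ψ(x) = F(|x|²) Y_k(x). If L_c ψ(x) = χ ψ(x) for all x in the open unit ball, then for all t ∈ (0,1): 4t(1−t) F''(t) + 2(m + 2k − t(2 + m + 2k)) F'(t) − 4π²c² t F(t) + χ F(t) = 0. -/
open MeasureTheory Real Finset
open scoped RealInnerProductSpace ENNReal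

noncomputable section

/-- `m`-dimensional Euclidean space. -/
abbrev Em (m : ℕ) := EuclideanSpace ℝ (Fin m)

variable {m : ℕ} {A : Type*} [NormedRing A] [NormedAlgebra ℂ A]

/-- `A` is a model of the complex Clifford algebra `ℂ_m`: it is generated by
`e 1, …, e m` with `e j ^ 2 = -1` and `e i * e j = - e j * e i` for `i ≠ j`, and the
ordered products `e_{j₁} ⋯ e_{j_h}` over subsets `{j₁ < ⋯ < j_h}` form a basis `b`. -/
structure IsCliffordAlgebra (m : ℕ) (A : Type*) [NormedRing A] [NormedAlgebra ℂ A]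
    (e : Fin m → A) (b : Module.Basis (Finset (Fin m)) ℂ A) : Prop where
  gen_sq : ∀ j, e j * e j = -1
  gen_anticomm : ∀ i j, i ≠ j → e i * e j = -(e j * e i)
  basis_prod : ∀ s : Finset (Fin m), b s = ((s.sort (· ≤ ·)).map e).prod

/-- The Clifford vector `x = Σ_j x_j e_j` associated to a point `x ∈ ℝ^m`. -/
def cvec (e : Fin m → A) (x : Em m) : A := ∑ j, ((x j : ℝ) : ℂ) • e j

/-- The scalar part `[a]₀` of a Clifford number. -/
def scalarPart (b : Module.Basis (Finset (Fin m)) ℂ A) (a : A) : ℂ := b.repr a ∅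

/-- Clifford conjugation: the conjugate-linear anti-automorphism with `conj (e j) = - e j`;
on the basis element `e_A` with `|A| = h` it acts as `(-1)^(h(h+1)/2)` together with complex
conjugation of the coordinates. -/
def cliffConj (b : Module.Basis (Finset (Fin m)) ℂ A) (a : A) : A :=
  (b.repr a).sum fun s c =>
    ((-1 : ℂ) ^ (s.card * (s.card + 1) / 2) * (starRingEnd ℂ) c) • b s

/-- The Clifford norm square `|a|² = [conj a * a]₀`. -/
def cliffNormSq (b : Module.Basis (Finset (Fin m)) ℂ A) (a : A) : ℂ :=
  scalarPart b (cliffConj b a * a)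

/-- The Dirac operator `∂ₓ f = Σ_j e_j ∂f/∂x_j`, acting on the left. -/
def dirac (e : Fin m → A) (f : Em m → A) (x : Em m) : A :=
  ∑ j, e j * fderiv ℝ f x (EuclideanSpace.single j 1)

/-- The Dirac operator acting on the right, `f ∂ₓ = Σ_j (∂f/∂x_j) e_j`. -/
def diracR (e : Fin m → A) (f : Em m → A) (x : Em m) : A :=
  ∑ j, fderiv ℝ f x (EuclideanSpace.single j 1) * e j

/-- The Clifford differential operator
`L_c f(x) = ∂ₓ((1 - |x|²) ∂ₓ f(x)) + 4π²c²|x|² f(x)`. -/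
def Lc (e : Fin m → A) (c : ℝ) (f : Em m → A) (x : Em m) : A :=
  dirac e (fun y => (1 - ‖y‖ ^ 2) • dirac e f y) x + (4 * π ^ 2 * c ^ 2 * ‖x‖ ^ 2) • f x


-- helpers
lemma rsmul_c (r : ℝ) (a : A) : (r : ℂ) • a = r • a := by
  rw [← Complex.coe_algebraMap, algebraMap_smul]

lemma real_smul_eq_zero (b : Module.Basis (Finset (Fin m)) ℂ A) {r : ℝ} {v : A}
    (h : r • v = 0) (hv : v ≠ 0) : r = 0 := by
  have h' : (r : ℂ) • v = 0 := by rw [rsmul_c]; exact h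
  have h2 : (r : ℂ) • b.repr v = 0 := by rw [← _root_.map_smul, h', map_zero]
  rcases smul_eq_zero.mp h2 with h0 | h0
  · exact_mod_cast h0
  · exact absurd (b.repr.map_eq_zero_iff.mp h0) hv

lemma cvec_eq_sum (e : Fin m → A) (x : Em m) : cvec e x = ∑ j, x j • e j := by
  unfold cvec; simp [rsmul_c]

lemma cvec_single (e : Fin m → A) (j : Fin m) :
    cvec e (EuclideanSpace.single j (1:ℝ)) = e j := by
  rw [cvec_eq_sum, Finset.sum_eq_single j]
  · simp
  · intro i _ hij; simp [EuclideanSpace.single_apply, hij]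
  · simp

lemma euclid_decomp (x : Em m) :
    ∑ j, x j • EuclideanSpace.single j (1:ℝ) = x := by
  ext i
  have : (∑ j, x j • EuclideanSpace.single j (1:ℝ)) i
      = ∑ j, (x j • EuclideanSpace.single j (1:ℝ)) i := by
    rw [WithLp.ofLp_sum, Finset.sum_apply]
  rw [this]
  simp [EuclideanSpace.single_apply]

lemma gen_pair {e : Fin m → A} {b : Module.Basis (Finset (Fin m)) ℂ A}
    (hA : IsCliffordAlgebra m A e b) (i j : Fin m) :
    e i * e j + e j * e i = if i = j then ((-2 : ℝ) • (1:A)) else 0 := by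
  by_cases h : i = j
  · subst h
    rw [if_pos rfl, hA.gen_sq i]
    have : ((-2:ℝ) • (1:A)) = -((2:ℝ) • (1:A)) := by rw [neg_smul]
    rw [this, two_smul]
    abel
  · rw [if_neg h, hA.gen_anticomm i j h]
    abel

lemma inner_self_sum (x : Em m) : ‖x‖ ^ 2 = ∑ j, x j * x j := by
  rw [← real_inner_self_eq_norm_sq]
  exact PiLp.inner_apply x x

lemma cvec_mul_cvec {e : Fin m → A} {b : Module.Basis (Finset (Fin m)) ℂ A}
    (hA : IsCliffordAlgebra m A e b) (x : Em m) :
    cvec e x * cvec e x = (-(‖x‖ ^ 2)) • (1:A) := by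
  have hS : cvec e x * cvec e x = ∑ i, ∑ j, (x i * x j) • (e i * e j) := by
    rw [cvec_eq_sum, Finset.sum_mul_sum]
    exact Finset.sum_congr rfl fun i _ => Finset.sum_congr rfl fun j _ =>
      smul_mul_smul_comm (x i) (e i) (x j) (e j)
  have hswap : (∑ i, ∑ j, (x i * x j) • (e i * e j))
      = ∑ i, ∑ j, (x i * x j) • (e j * e i) := by
    rw [Finset.sum_comm]
    exact Finset.sum_congr rfl fun i _ => Finset.sum_congr rfl fun j _ => by
      rw [mul_comm (x j) (x i)]
  have h2 : (2:ℝ) • (cvec e x * cvec e x)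
      = (2:ℝ) • ((-(‖x‖ ^ 2)) • (1:A)) := by
    have hdd : (2:ℝ) • (cvec e x * cvec e x)
        = ∑ i, ∑ j, (x i * x j) • (e i * e j + e j * e i) := by
      rw [two_smul, hS]
      nth_rewrite 2 [hswap]
      rw [← Finset.sum_add_distrib]
      refine Finset.sum_congr rfl fun i _ => ?_
      rw [← Finset.sum_add_distrib]
      exact Finset.sum_congr rfl fun j _ => (smul_add _ _ _).symm
    rw [hdd]
    have hinner : ∀ i : Fin m, ∑ j, (x i * x j) • (e i * e j + e j * e i)
        = (-2 * (x i * x i)) • (1:A) := by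
      intro i
      have : ∀ j : Fin m, (x i * x j) • (e i * e j + e j * e i)
          = if i = j then (-2 * (x i * x j)) • (1:A) else 0 := by
        intro j
        rw [gen_pair hA i j]
        by_cases h : i = j
        · rw [if_pos h, if_pos h, smul_smul, mul_comm (x i * x j) (-2)]
        · rw [if_neg h, if_neg h, smul_zero]
      rw [Finset.sum_congr rfl fun j _ => this j, Finset.sum_ite_eq]
      simp
    rw [Finset.sum_congr rfl fun i _ => hinner i]
    rw [← Finset.sum_smul, ← Finset.mul_sum, ← inner_self_sum, smul_smul]
    congr 1
    ring
  calc cvec e x * cvec e x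
      = ((1/2 : ℝ) * 2) • (cvec e x * cvec e x) := by norm_num
    _ = (1/2 : ℝ) • ((2:ℝ) • (cvec e x * cvec e x)) := by rw [mul_smul]
    _ = (1/2 : ℝ) • ((2:ℝ) • ((-(‖x‖ ^ 2)) • (1:A))) := by rw [h2]
    _ = (-(‖x‖ ^ 2)) • (1:A) := by rw [smul_smul, smul_smul]; norm_num

lemma gen_mul_cvec {e : Fin m → A} {b : Module.Basis (Finset (Fin m)) ℂ A}
    (hA : IsCliffordAlgebra m A e b) (x : Em m) (j : Fin m) :
    e j * cvec e x = -(cvec e x * e j) - (2 * x j) • (1:A) := by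
  have h : e j * cvec e x + cvec e x * e j = (-(2 * x j)) • (1:A) := by
    rw [cvec_eq_sum, Finset.mul_sum, Finset.sum_mul, ← Finset.sum_add_distrib]
    have : ∀ i : Fin m, e j * (x i • e i) + (x i • e i) * e j
        = if j = i then (-(2 * x j)) • (1:A) else 0 := by
      intro i
      rw [mul_smul_comm, smul_mul_assoc, ← smul_add, gen_pair hA j i]
      by_cases h : j = i
      · rw [if_pos h, if_pos h, smul_smul, ← h]
        congr 1
        ring
      · rw [if_neg h, if_neg h, smul_zero]
    rw [Finset.sum_congr rfl fun i _ => this i, Finset.sum_ite_eq]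
    simp
  have h' := eq_sub_of_add_eq h
  rw [h', neg_smul]
  abel

section euler
variable {Y : Em m → A} {k : ℕ}

lemma euler_id (hYsm : ContDiff ℝ (⊤ : ℕ∞) Y)
    (hYhom : ∀ t : ℝ, 0 < t → ∀ x, Y (t • x) = (t ^ k) • Y x) (x : Em m) :
    fderiv ℝ Y x x = (k : ℝ) • Y x := by
  have hdY : HasFDerivAt Y (fderiv ℝ Y x) ((1:ℝ) • x) := by
    rw [one_smul]; exact (hYsm.differentiable (by simp) x).hasFDerivAt
  have hs : HasDerivAt (fun s : ℝ => s • x) ((1:ℝ) • x) 1 :=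
    (hasDerivAt_id 1).smul_const x
  have h1 : HasDerivAt (fun s : ℝ => Y (s • x)) (fderiv ℝ Y x x) 1 := by
    have := hdY.comp_hasDerivAt 1 hs
    rw [one_smul] at this; exact this
  have h2 : HasDerivAt (fun s : ℝ => s ^ k • Y x) ((k : ℝ) • Y x) 1 := by
    simpa using (hasDerivAt_pow k (1:ℝ)).smul_const (Y x)
  have heq : (fun s : ℝ => s ^ k • Y x) =ᶠ[nhds (1:ℝ)] fun s => Y (s • x) := by
    filter_upwards [Ioi_mem_nhds (by norm_num : (0:ℝ) < 1)] with s hs'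
    exact (hYhom s hs' x).symm
  exact h1.unique (h2.congr_of_eventuallyEq heq.symm)

lemma euler_sum (hYsm : ContDiff ℝ (⊤ : ℕ∞) Y)
    (hYhom : ∀ t : ℝ, 0 < t → ∀ x, Y (t • x) = (t ^ k) • Y x) (x : Em m) :
    ∑ j, x j • fderiv ℝ Y x (EuclideanSpace.single j 1) = (k : ℝ) • Y x := by
  have : ∑ j, x j • fderiv ℝ Y x (EuclideanSpace.single j 1)
      = fderiv ℝ Y x (∑ j, x j • EuclideanSpace.single j (1:ℝ)) := by
    rw [map_sum]
    exact Finset.sum_congr rfl fun j _ => ((fderiv ℝ Y x).map_smul _ _).symm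
  rw [this, euclid_decomp]
  exact euler_id hYsm hYhom x

end euler

def cvecL (e : Fin m → A) : Em m →L[ℝ] A :=
  ∑ j, (EuclideanSpace.proj j : Em m →L[ℝ] ℝ).smulRight (e j)

lemma cvecL_apply (e : Fin m → A) (x : Em m) : cvecL e x = cvec e x := by
  rw [cvec_eq_sum]
  rw [cvecL, ContinuousLinearMap.sum_apply]
  exact Finset.sum_congr rfl fun j _ => by
    simp [ContinuousLinearMap.smulRight_apply]

lemma hasFDerivAt_cvec (e : Fin m → A) (x : Em m) :
    HasFDerivAt (cvec e) (cvecL e) x := by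
  have : cvec e = ⇑(cvecL e) := funext fun y => (cvecL_apply e y).symm
  rw [this]
  exact (cvecL e).hasFDerivAt

section diracpsi
variable {Y : Em m → A} {k : ℕ}

lemma hasFDerivAt_normsq (y : Em m) :
    HasFDerivAt (fun z : Em m => ‖z‖ ^ 2) ((2:ℝ) • (innerSL ℝ y)) y := by
  have := (hasFDerivAt_id y).norm_sq
  simpa [two_smul, ContinuousLinearMap.comp_id] using this

lemma psi_hasFDerivAt (hYsm : ContDiff ℝ (⊤ : ℕ∞) Y) {F : ℝ → ℝ} {y : Em m} {p : ℝ}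
    (hFd : HasDerivAt F p (‖y‖ ^ 2)) :
    HasFDerivAt (fun z => F (‖z‖ ^ 2) • Y z)
      (F (‖y‖ ^ 2) • (fderiv ℝ Y y) + (p • ((2:ℝ) • innerSL ℝ y)).smulRight (Y y)) y := by
  have hn := hasFDerivAt_normsq y
  have hc : HasFDerivAt (fun z : Em m => F (‖z‖ ^ 2)) (p • ((2:ℝ) • innerSL ℝ y)) y :=
    hFd.comp_hasFDerivAt y hn
  exact hc.smul (hYsm.differentiable (by simp) y).hasFDerivAt

lemma psi_fderiv_apply (hYsm : ContDiff ℝ (⊤ : ℕ∞) Y) {F : ℝ → ℝ} {y : Em m} {p : ℝ}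
    (hFd : HasDerivAt F p (‖y‖ ^ 2)) (j : Fin m) :
    fderiv ℝ (fun z => F (‖z‖ ^ 2) • Y z) y (EuclideanSpace.single j 1)
      = F (‖y‖ ^ 2) • fderiv ℝ Y y (EuclideanSpace.single j 1) + (p * (2 * y j)) • Y y := by
  rw [(psi_hasFDerivAt hYsm hFd).fderiv]
  simp only [ContinuousLinearMap.add_apply, ContinuousLinearMap.smul_apply,
    ContinuousLinearMap.smulRight_apply, innerSL_apply_apply]
  have h : ⟪y, EuclideanSpace.single j (1:ℝ)⟫ = y j := by
    rw [EuclideanSpace.inner_single_right]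
    simp
  rw [h, smul_eq_mul, smul_eq_mul]

lemma dirac_psi (e : Fin m → A) (hYsm : ContDiff ℝ (⊤ : ℕ∞) Y)
    (hYmono : ∀ x, dirac e Y x = 0) {F : ℝ → ℝ} {y : Em m} {p : ℝ}
    (hFd : HasDerivAt F p (‖y‖ ^ 2)) :
    dirac e (fun z => F (‖z‖ ^ 2) • Y z) y = (2 * p) • (cvec e y * Y y) := by
  unfold dirac
  rw [Finset.sum_congr rfl fun j _ => by
    rw [psi_fderiv_apply hYsm hFd j, mul_add, mul_smul_comm, mul_smul_comm]]
  rw [Finset.sum_add_distrib]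
  have h1 : ∑ j, F (‖y‖ ^ 2) • (e j * fderiv ℝ Y y (EuclideanSpace.single j 1))
      = F (‖y‖ ^ 2) • dirac e Y y := by
    rw [dirac, Finset.smul_sum]
  have h2 : ∑ j, (p * (2 * y j)) • (e j * Y y) = (2 * p) • (cvec e y * Y y) := by
    rw [cvec_eq_sum, Finset.sum_mul, Finset.smul_sum]
    refine Finset.sum_congr rfl fun j _ => ?_
    rw [smul_mul_assoc, smul_smul]
    congr 1
    ring
  rw [h1, h2, hYmono, smul_zero, zero_add]
end diracpsi

lemma exists_good_point {Y : Em m → A} {k : ℕ} (hm : 2 ≤ m)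
    (b : Module.Basis (Finset (Fin m)) ℂ A) (hY0 : Y ≠ 0) (hYc : Continuous Y)
    (hYhom : ∀ t : ℝ, 0 < t → ∀ x, Y (t • x) = (t ^ k) • Y x) :
    ∃ x₀ : Em m, x₀ ≠ 0 ∧ Y x₀ ≠ 0 := by
  obtain ⟨x₁, hx₁⟩ := Function.ne_iff.mp hY0
  by_cases hx : x₁ = 0
  · subst hx
    simp only [Pi.zero_apply] at hx₁
    by_cases hk : k = 0
    · subst hk
      set v : Em m := EuclideanSpace.single (⟨0, by omega⟩ : Fin m) (1:ℝ) with hv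
      have hvne : v ≠ 0 := by
        intro h
        have : v (⟨0, by omega⟩ : Fin m) = 1 := by simp [hv]
        rw [h] at this
        simp at this
      refine ⟨v, hvne, ?_⟩
      have hconst : ∀ s : ℝ, 0 < s → Y (s • v) = Y v := by
        intro s hs
        rw [hYhom s hs v, pow_zero, one_smul]
      have hlim : Filter.Tendsto (fun s : ℝ => Y (s • v)) (nhdsWithin 0 (Set.Ioi 0))
          (nhds (Y 0)) := by
        have h1 : Filter.Tendsto (fun s : ℝ => s • v) (nhdsWithin 0 (Set.Ioi 0))
            (nhds (0 : Em m)) := by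
          have : Filter.Tendsto (fun s : ℝ => s • v) (nhds 0) (nhds ((0:ℝ) • v)) :=
            (continuous_id.smul continuous_const).tendsto 0
          rw [zero_smul] at this
          exact this.mono_left nhdsWithin_le_nhds
        exact (hYc.tendsto 0).comp h1
      have hlim2 : Filter.Tendsto (fun s : ℝ => Y (s • v)) (nhdsWithin 0 (Set.Ioi 0))
          (nhds (Y v)) := by
        apply Filter.Tendsto.congr' _ tendsto_const_nhds
        filter_upwards [self_mem_nhdsWithin] with s hs
        exact (hconst s hs).symm
      have := tendsto_nhds_unique hlim2 hlim
      rw [this]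
      exact hx₁
    · exfalso
      have h2 := hYhom 2 (by norm_num) 0
      rw [smul_zero] at h2
      have : (1 - (2:ℝ) ^ k) • Y 0 = 0 := by
        rw [sub_smul, one_smul, ← h2, sub_self]
      have hr := real_smul_eq_zero b this hx₁
      have : (2:ℝ) ^ k ≥ 2 ^ 1 := by
        apply pow_le_pow_right₀ (by norm_num)
        omega
      simp at this
      nlinarith [hr]
  · exact ⟨x₁, hx, hx₁⟩

/-- The radial part `F` of an even eigenfunction `F(|x|²)Y_k(x)` of `L_c`
with eigenvalue `χ` satisfies
`4t(1-t)F'' + 2(m+2k-t(2+m+2k))F' - 4π²c²tF + χF = 0` on `(0,1)`. -/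
theorem radial_ODE_even {m : ℕ} (hm : 2 ≤ m) {A : Type*} [NormedRing A]
    [NormedAlgebra ℂ A] (e : Fin m → A) (b : Module.Basis (Finset (Fin m)) ℂ A)
    (hA : IsCliffordAlgebra m A e b) (k : ℕ) {c : ℝ} (hc : 0 ≤ c) (χ : ℝ)
    (Y : Em m → A) (hY0 : Y ≠ 0)
    (hYsm : ContDiff ℝ (⊤ : ℕ∞) Y)
    (hYhom : ∀ t : ℝ, 0 < t → ∀ x, Y (t • x) = (t ^ k) • Y x)
    (hYmono : ∀ x, dirac e Y x = 0)
    (F : ℝ → ℝ) (hF : ContDiffOn ℝ 2 F (Set.Icc 0 1))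
    (heig : ∀ x ∈ Metric.ball (0 : Em m) 1,
      Lc e c (fun y => F (‖y‖ ^ 2) • Y y) x = χ • (F (‖x‖ ^ 2) • Y x)) :
    ∀ t ∈ Set.Ioo (0 : ℝ) 1,
      4 * t * (1 - t) * deriv (deriv F) t +
          2 * ((m : ℝ) + 2 * k - t * (2 + m + 2 * k)) * deriv F t -
          4 * π ^ 2 * c ^ 2 * t * F t + χ * F t = 0 := by
  intro t ht
  obtain ⟨ht0, ht1⟩ := ht
  have hYd : Differentiable ℝ Y := hYsm.differentiable (by simp)
  have hFIoo : ContDiffOn ℝ 2 F (Set.Ioo 0 1) := hF.mono Set.Ioo_subset_Icc_self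
  have hFdiff : ∀ s ∈ Set.Ioo (0:ℝ) 1, DifferentiableAt ℝ F s := fun s hs =>
    (hFIoo.contDiffAt (Ioo_mem_nhds hs.1 hs.2)).differentiableAt (by norm_num)
  have hF' : ContDiffOn ℝ 1 (deriv F) (Set.Ioo 0 1) :=
    hFIoo.deriv_of_isOpen isOpen_Ioo (by norm_num)
  have hF'diff : DifferentiableAt ℝ (deriv F) t :=
    (hF'.contDiffAt (Ioo_mem_nhds ht0 ht1)).differentiableAt one_ne_zero
  obtain ⟨x₀, hx₀ne, hYx₀⟩ := exists_good_point hm b hY0 hYsm.continuous hYhom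
  have hx₀norm : 0 < ‖x₀‖ := norm_pos_iff.mpr hx₀ne
  set r : ℝ := Real.sqrt t / ‖x₀‖ with hr
  have hrpos : 0 < r := div_pos (Real.sqrt_pos.mpr ht0) hx₀norm
  set x : Em m := r • x₀ with hxdef
  have hxnorm : ‖x‖ ^ 2 = t := by
    rw [hxdef, norm_smul, Real.norm_eq_abs, abs_of_pos hrpos, hr,
      div_mul_cancel₀ _ (ne_of_gt hx₀norm)]
    exact Real.sq_sqrt ht0.le
  have hxball : x ∈ Metric.ball (0 : Em m) 1 := by
    rw [mem_ball_zero_iff]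
    nlinarith [hxnorm, norm_nonneg x]
  have hYx : Y x ≠ 0 := by
    rw [hxdef, hYhom r hrpos x₀]
    intro h
    exact (pow_ne_zero k (ne_of_gt hrpos)) (real_smul_eq_zero b h hYx₀)
  set ψ : Em m → A := fun y => F (‖y‖ ^ 2) • Y y with hψdef
  set U : Set (Em m) := {y | ‖y‖ ^ 2 ∈ Set.Ioo (0:ℝ) 1} with hUdef
  have hUopen : IsOpen U := IsOpen.preimage (continuous_norm.pow 2) isOpen_Ioo
  have hxU : x ∈ U := by
    rw [hUdef]
    simp only [Set.mem_setOf_eq, hxnorm]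
    exact ⟨ht0, ht1⟩
  set G : ℝ → ℝ := fun s => 2 * ((1 - s) * deriv F s) with hGdef
  set W : Em m → A := fun y => cvec e y * Y y with hWdef
  have hformula : ∀ y ∈ U, (1 - ‖y‖ ^ 2) • dirac e ψ y = G (‖y‖ ^ 2) • W y := by
    intro y hy
    rw [hψdef, dirac_psi e hYsm hYmono ((hFdiff _ hy).hasDerivAt), smul_smul, hGdef, hWdef]
    congr 1
    ring
  set G' : ℝ := 2 * ((-1) * deriv F t + (1 - t) * deriv (deriv F) t) with hG'def
  have hGd : HasDerivAt G G' t := by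
    have h1 : HasDerivAt (fun s : ℝ => 1 - s) (-1) t := by
      simpa using (hasDerivAt_id t).const_sub 1
    exact (h1.mul hF'diff.hasDerivAt).const_mul 2
  rw [← hxnorm] at hGd
  have hGn : HasFDerivAt (fun y : Em m => G (‖y‖ ^ 2)) (G' • ((2:ℝ) • innerSL ℝ x)) x :=
    HasDerivAt.comp_hasFDerivAt (h₂ := G) (f := fun y : Em m => ‖y‖ ^ 2) x hGd (hasFDerivAt_normsq x)
  have hWd : HasFDerivAt W (cvec e x • (fderiv ℝ Y x) + (cvecL e).smulRight (Y x)) x := by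
    rw [hWdef]
    exact (hasFDerivAt_cvec e x).mul' (hYd x).hasFDerivAt
  have hhd : HasFDerivAt (fun y => G (‖y‖ ^ 2) • W y)
      (G (‖x‖ ^ 2) • (cvec e x • fderiv ℝ Y x + (cvecL e).smulRight (Y x))
        + (G' • ((2:ℝ) • innerSL ℝ x)).smulRight (W x)) x := hGn.smul hWd
  have hfe : (fun y => (1 - ‖y‖ ^ 2) • dirac e ψ y) =ᶠ[nhds x]
      fun y => G (‖y‖ ^ 2) • W y := by
    filter_upwards [hUopen.mem_nhds hxU] with y hy
    exact hformula y hy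
  have hfd : fderiv ℝ (fun y => (1 - ‖y‖ ^ 2) • dirac e ψ y) x
      = fderiv ℝ (fun y => G (‖y‖ ^ 2) • W y) x := hfe.fderiv_eq
  -- three partial sums
  have hS1 : ∑ j, e j * (cvec e x * fderiv ℝ Y x (EuclideanSpace.single j 1))
      = (-(2*(k:ℝ))) • Y x := by
    have step : ∀ j, e j * (cvec e x * fderiv ℝ Y x (EuclideanSpace.single j 1))
        = -(cvec e x * (e j * fderiv ℝ Y x (EuclideanSpace.single j 1)))
          - (2 * x j) • fderiv ℝ Y x (EuclideanSpace.single j 1) := by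
      intro j
      rw [← mul_assoc, gen_mul_cvec hA x j, sub_mul, neg_mul, mul_assoc,
        smul_mul_assoc, one_mul]
    rw [Finset.sum_congr rfl fun j _ => step j, Finset.sum_sub_distrib]
    have e1 : ∑ j, -(cvec e x * (e j * fderiv ℝ Y x (EuclideanSpace.single j 1))) = 0 := by
      rw [Finset.sum_neg_distrib, ← Finset.mul_sum]
      have : ∑ j, e j * fderiv ℝ Y x (EuclideanSpace.single j 1) = dirac e Y x := rfl
      rw [this, hYmono, mul_zero, neg_zero]
    have e2 : ∑ j, (2 * x j) • fderiv ℝ Y x (EuclideanSpace.single j 1)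
        = (2*(k:ℝ)) • Y x := by
      have : ∀ j : Fin m, (2 * x j) • fderiv ℝ Y x (EuclideanSpace.single j 1)
          = (2:ℝ) • (x j • fderiv ℝ Y x (EuclideanSpace.single j 1)) := by
        intro j
        rw [smul_smul]
      rw [Finset.sum_congr rfl fun j _ => this j, ← Finset.smul_sum,
        euler_sum hYsm hYhom x, smul_smul]
    rw [e1, e2, zero_sub, neg_smul]
  have hS2 : ∑ j, e j * (e j * Y x) = (-(m:ℝ)) • Y x := by
    rw [Finset.sum_congr rfl fun j _ => by rw [← mul_assoc, hA.gen_sq j, neg_one_mul]]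
    rw [Finset.sum_const, Finset.card_univ, Fintype.card_fin, smul_neg, neg_smul]
    congr 1
    exact (Nat.cast_smul_eq_nsmul ℝ m (Y x)).symm
  have hS3 : ∑ j, x j • (e j * W x) = (-t) • Y x := by
    have : ∑ j, x j • (e j * W x) = cvec e x * W x := by
      rw [cvec_eq_sum, Finset.sum_mul]
      exact Finset.sum_congr rfl fun j _ => (smul_mul_assoc _ _ _).symm
    rw [this, hWdef, ← mul_assoc, cvec_mul_cvec hA x, smul_mul_assoc, one_mul, hxnorm]
  -- evaluation of the derivative CLM
  have happ : ∀ j : Fin m, (G (‖x‖ ^ 2) • (cvec e x • fderiv ℝ Y x + (cvecL e).smulRight (Y x))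
        + (G' • ((2:ℝ) • innerSL ℝ x)).smulRight (W x)) (EuclideanSpace.single j 1)
      = G t • (cvec e x * fderiv ℝ Y x (EuclideanSpace.single j 1) + e j * Y x)
        + (G' * (2 * x j)) • W x := by
    intro j
    have hinner : ⟪x, EuclideanSpace.single j (1:ℝ)⟫ = x j := by
      rw [EuclideanSpace.inner_single_right]
      simp
    simp only [ContinuousLinearMap.add_apply, ContinuousLinearMap.smul_apply,
      ContinuousLinearMap.smulRight_apply, innerSL_apply_apply, smul_eq_mul, hinner,
      cvecL_apply, cvec_single, hxnorm]
  have hdg : dirac e (fun y => (1 - ‖y‖ ^ 2) • dirac e ψ y) x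
      = (G t * (-(2*(k:ℝ))) + G t * (-(m:ℝ)) + (2 * G') * (-t)) • Y x := by
    have hunf : dirac e (fun y => (1 - ‖y‖ ^ 2) • dirac e ψ y) x
        = ∑ j, e j * fderiv ℝ (fun y => (1 - ‖y‖ ^ 2) • dirac e ψ y) x
            (EuclideanSpace.single j 1) := rfl
    rw [hunf]
    rw [Finset.sum_congr rfl fun j _ => by rw [hfd, hhd.fderiv, happ j]]
    have hterm : ∀ j : Fin m,
        e j * (G t • (cvec e x * fderiv ℝ Y x (EuclideanSpace.single j 1) + e j * Y x)
          + (G' * (2 * x j)) • W x)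
        = G t • (e j * (cvec e x * fderiv ℝ Y x (EuclideanSpace.single j 1)))
          + G t • (e j * (e j * Y x)) + ((2 * G') * x j) • (e j * W x) := by
      intro j
      rw [mul_add, mul_smul_comm, mul_smul_comm, mul_add, smul_add]
      congr 1
      congr 1
      ring
    rw [Finset.sum_congr rfl fun j _ => hterm j, Finset.sum_add_distrib,
      Finset.sum_add_distrib, ← Finset.smul_sum, ← Finset.smul_sum, hS1, hS2]
    have : ∑ j, ((2 * G') * x j) • (e j * W x) = (2 * G') • ∑ j, x j • (e j * W x) := by
      rw [Finset.smul_sum]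
      exact Finset.sum_congr rfl fun j _ => by rw [smul_smul]
    rw [this, hS3, smul_smul, smul_smul, smul_smul, ← add_smul, ← add_smul]
  -- assemble
  have heq := heig x hxball
  unfold Lc at heq
  rw [hdg] at heq
  simp only [hψdef] at heq
  rw [hxnorm] at heq
  have hcol : ((G t * (-(2*(k:ℝ))) + G t * (-(m:ℝ)) + (2 * G') * (-t))
      + 4 * π ^ 2 * c ^ 2 * t * F t - χ * F t) • Y x = 0 := by
    rw [sub_smul, add_smul]
    have h2 : (4 * π ^ 2 * c ^ 2 * t) • (F t • Y x)
        = (4 * π ^ 2 * c ^ 2 * t * F t) • Y x := by rw [smul_smul]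
    have h3 : χ • (F t • Y x) = (χ * F t) • Y x := by rw [smul_smul]
    rw [← h2, ← h3, heq]
    abel
  have hscal := real_smul_eq_zero b hcol hYx
  rw [hGdef] at hscal
  simp only [hG'def] at hscal
  linear_combination -hscal
end
end

section
/- Let m ≥ 2, k ≥ 0, c ≥ 0 and let χ₁ ≠ χ₂ be real numbers. Suppose F₁, F₂ ∈ C²([0,1]) satisfy, for i = 1,2 and all t ∈ [0,1]: 4t(1−t) F_i''(t) + 2(m + 2k − t(2 + m + 2k)) F_i'(t) − 4π²c² t F_i(t) + χ_i F_i(t) = 0. Then ∫₀¹ F₁(t) F₂(t) t^{k + m/2 − 1} dt = 0. -/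
open MeasureTheory Real

noncomputable section

/-- Sturm–Liouville orthogonality for the radial parts of the even Clifford
prolate spheroidal wave functions: solutions of
`4t(1-t)F'' + 2(m+2k-t(2+m+2k))F' - 4π²c²tF + χF = 0` on `[0,1]` with different values of `χ`
are orthogonal with respect to the weight `t^{k+m/2-1}`. -/
theorem SL_orthogonality {m k : ℕ} (hm : 2 ≤ m) {c : ℝ} (hc : 0 ≤ c)
    (χ₁ χ₂ : ℝ) (hχ : χ₁ ≠ χ₂) (F₁ F₂ : ℝ → ℝ)
    (hF₁ : ContDiffOn ℝ 2 F₁ (Set.Icc 0 1)) (hF₂ : ContDiffOn ℝ 2 F₂ (Set.Icc 0 1))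
    (hode₁ : ∀ t ∈ Set.Icc (0 : ℝ) 1,
      4 * t * (1 - t) * derivWithin (derivWithin F₁ (Set.Icc 0 1)) (Set.Icc 0 1) t +
          2 * ((m : ℝ) + 2 * k - t * (2 + m + 2 * k)) * derivWithin F₁ (Set.Icc 0 1) t -
          4 * π ^ 2 * c ^ 2 * t * F₁ t + χ₁ * F₁ t = 0)
    (hode₂ : ∀ t ∈ Set.Icc (0 : ℝ) 1,
      4 * t * (1 - t) * derivWithin (derivWithin F₂ (Set.Icc 0 1)) (Set.Icc 0 1) t +
          2 * ((m : ℝ) + 2 * k - t * (2 + m + 2 * k)) * derivWithin F₂ (Set.Icc 0 1) t -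
          4 * π ^ 2 * c ^ 2 * t * F₂ t + χ₂ * F₂ t = 0) :
    ∫ t in (0 : ℝ)..1, F₁ t * F₂ t * t ^ ((k : ℝ) + m / 2 - 1) = 0 := by
  set α : ℝ := (k : ℝ) + m / 2 - 1 with hα_def
  have hm2 : (2 : ℝ) ≤ m := by exact_mod_cast hm
  have hα0 : 0 ≤ α := by
    have : (0 : ℝ) ≤ k := Nat.cast_nonneg k
    rw [hα_def]; linarith
  set g₁ := derivWithin F₁ (Set.Icc 0 1) with hg₁_def
  set g₂ := derivWithin F₂ (Set.Icc 0 1) with hg₂_def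
  set h₁ := derivWithin g₁ (Set.Icc 0 1) with hh₁_def
  set h₂ := derivWithin g₂ (Set.Icc 0 1) with hh₂_def
  have hud : UniqueDiffOn ℝ (Set.Icc (0:ℝ) 1) := uniqueDiffOn_Icc zero_lt_one
  have hg₁c : ContDiffOn ℝ 1 g₁ (Set.Icc 0 1) := hF₁.derivWithin hud (by norm_num)
  have hg₂c : ContDiffOn ℝ 1 g₂ (Set.Icc 0 1) := hF₂.derivWithin hud (by norm_num)
  set W : ℝ → ℝ := fun t => (4 * t ^ (α+1) * (1-t)) * (g₁ t * F₂ t - F₁ t * g₂ t) with hW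
  have hcA : Continuous fun t : ℝ => t ^ α := by
    exact continuous_iff_continuousAt.mpr fun x =>
      Real.continuousAt_rpow_const x _ (Or.inr hα0)
  have hcA1 : Continuous fun t : ℝ => t ^ (α + 1) := by
    exact continuous_iff_continuousAt.mpr fun x =>
      Real.continuousAt_rpow_const x _ (Or.inr (by linarith : (0:ℝ) ≤ α + 1))
  have hcont : ContinuousOn W (Set.Icc 0 1) := by
    apply ContinuousOn.mul
    · exact (continuousOn_const.mul hcA1.continuousOn).mul (continuousOn_const.sub continuousOn_id)
    · exact ((hg₁c.continuousOn.mul hF₂.continuousOn).sub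
        (hF₁.continuousOn.mul hg₂c.continuousOn))
  have hdW : ∀ t ∈ Set.Ioo (0:ℝ) 1,
      HasDerivAt W ((χ₂ - χ₁) * (F₁ t * F₂ t * t ^ α)) t := by
    intro t ht
    obtain ⟨ht0, ht1⟩ := ht
    have hmem : t ∈ Set.Icc (0:ℝ) 1 := ⟨ht0.le, ht1.le⟩
    have hnhds : Set.Icc (0:ℝ) 1 ∈ nhds t := Icc_mem_nhds ht0 ht1
    have hF₁d : HasDerivAt F₁ (g₁ t) t :=
      ((hF₁.differentiableOn (by norm_num) t hmem).hasDerivWithinAt).hasDerivAt hnhds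
    have hF₂d : HasDerivAt F₂ (g₂ t) t :=
      ((hF₂.differentiableOn (by norm_num) t hmem).hasDerivWithinAt).hasDerivAt hnhds
    have hg₁d : HasDerivAt g₁ (h₁ t) t :=
      ((hg₁c.differentiableOn (by norm_num) t hmem).hasDerivWithinAt).hasDerivAt hnhds
    have hg₂d : HasDerivAt g₂ (h₂ t) t :=
      ((hg₂c.differentiableOn (by norm_num) t hmem).hasDerivWithinAt).hasDerivAt hnhds
    have hr : HasDerivAt (fun x : ℝ => x ^ (α+1)) ((α+1) * t ^ α) t := by
      have := Real.hasDerivAt_rpow_const (x := t) (p := α+1) (Or.inl ht0.ne')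
      rwa [show α + 1 - 1 = α by ring] at this
    have hP : HasDerivAt (fun x : ℝ => 4 * x ^ (α+1) * (1-x))
        ((4 * ((α+1) * t ^ α)) * (1-t) + (4 * t ^ (α+1)) * (-1)) t := by
      exact ((hr.const_mul (4:ℝ)).mul ((hasDerivAt_id t).const_sub 1)).congr_deriv (by simp)
    have hG : HasDerivAt (fun x => g₁ x * F₂ x - F₁ x * g₂ x)
        ((h₁ t * F₂ t + g₁ t * g₂ t) - (g₁ t * g₂ t + F₁ t * h₂ t)) t :=
      (hg₁d.mul hF₂d).sub (hF₁d.mul hg₂d)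
    have hWd := hP.mul hG
    have key : ((4 * ((α+1) * t ^ α)) * (1-t) + (4 * t ^ (α+1)) * (-1)) *
          (g₁ t * F₂ t - F₁ t * g₂ t) +
        (4 * t ^ (α+1) * (1-t)) *
          ((h₁ t * F₂ t + g₁ t * g₂ t) - (g₁ t * g₂ t + F₁ t * h₂ t)) =
        (χ₂ - χ₁) * (F₁ t * F₂ t * t ^ α) := by
      have e₁ := hode₁ t hmem
      have e₂ := hode₂ t hmem
      have hts : t ^ (α+1) = t ^ α * t := Real.rpow_add_one ht0.ne' α
      rw [hts, hα_def]
      linear_combination (t ^ α * F₂ t) * e₁ - (t ^ α * F₁ t) * e₂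
    rw [← key]
    exact hWd
  have hci : IntervalIntegrable (fun t => (χ₂ - χ₁) * (F₁ t * F₂ t * t ^ α))
      volume 0 1 := by
    apply ContinuousOn.intervalIntegrable
    rw [Set.uIcc_of_le zero_le_one]
    exact continuousOn_const.mul
      ((hF₁.continuousOn.mul hF₂.continuousOn).mul hcA.continuousOn)
  have hFTC := intervalIntegral.integral_eq_sub_of_hasDerivAt_of_le zero_le_one
    hcont hdW hci
  have hW1 : W 1 = 0 := by simp [hW]
  have hW0 : W 0 = 0 := by
    have : (0:ℝ) ^ (α+1) = 0 := Real.zero_rpow (by linarith)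
    simp [hW, this]
  rw [hW1, hW0, sub_zero, intervalIntegral.integral_const_mul] at hFTC
  have hne : χ₂ - χ₁ ≠ 0 := sub_ne_zero.mpr (Ne.symm hχ)
  exact (mul_eq_zero.mp hFTC).resolve_left hne
end
end

section
/- Let m ≥ 2 and c > 0. Let ψ ∈ L²(B(1), ℂ_m) with ∫_{B(1)} |ψ(x)|² dx > 0, let μ ∈ ℂ and λ ∈ ℝ. If G_c ψ = μ ψ and Q P_c ψ = λ ψ (as elements of L²), then |μ|² = λ / c^m. -/
open MeasureTheory Real Finset
open scoped RealInnerProductSpace ENNReal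

noncomputable section

variable {m : ℕ} {A : Type*} [NormedRing A] [NormedAlgebra ℂ A]

open scoped FourierTransform

/-- The finite Fourier transform
`G_c f(x) = χ_{B(1)}(x) ∫_{B(1)} e^{2πic x·y} f(y) dy`. -/
def Gc {m : ℕ} {A : Type*} [NormedRing A] [NormedAlgebra ℂ A]
    (c : ℝ) (f : Em m → A) : Em m → A :=
  Set.indicator (Metric.closedBall (0 : Em m) 1) fun x =>
    ∫ y in Metric.closedBall (0 : Em m) 1,
      Complex.exp (((2 * π * c * ⟪x, y⟫ : ℝ) : ℂ) * Complex.I) • f y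

/-- The bandlimiting operator `P_c f(x) = ∫_{B(c)} 𝓕f(ξ) e^{2πi ξ·x} dξ`. -/
def Pc {m : ℕ} {A : Type*} [NormedRing A] [NormedAlgebra ℂ A]
    (c : ℝ) (f : Em m → A) (x : Em m) : A :=
  ∫ ξ in Metric.closedBall (0 : Em m) c,
    Complex.exp (((2 * π * ⟪ξ, x⟫ : ℝ) : ℂ) * Complex.I) • (𝓕 f) ξ

set_option maxHeartbeats 1000000
open scoped Pointwise

section AuxEig
/- ## Auxiliary machinery -/

lemma cliffConj_smul (b : Module.Basis (Finset (Fin m)) ℂ A) (μ : ℂ) (x : A) :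
    cliffConj b (μ • x) = (starRingEnd ℂ μ) • cliffConj b x := by
  unfold cliffConj
  rw [_root_.map_smul, Finsupp.sum_smul_index' (by intro i; simp), Finsupp.smul_sum]
  refine Finsupp.sum_congr fun s hs => ?_
  rw [smul_eq_mul, map_mul, smul_smul]
  congr 1
  ring

lemma cliffConj_add (b : Module.Basis (Finset (Fin m)) ℂ A) (x y : A) :
    cliffConj b (x + y) = cliffConj b x + cliffConj b y := by
  unfold cliffConj
  rw [map_add, Finsupp.sum_add_index']
  · intro i; simp
  · intro s c1 c2; rw [map_add, mul_add, add_smul]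

def conjL (b : Module.Basis (Finset (Fin m)) ℂ A) : A →ₗ[ℝ] A where
  toFun := cliffConj b
  map_add' := cliffConj_add b
  map_smul' := fun r x => by
    have h : r • x = (r : ℂ) • x := (Complex.coe_smul r x).symm
    show cliffConj b (r • x) = r • cliffConj b x
    rw [h, cliffConj_smul, Complex.conj_ofReal, Complex.coe_smul]

variable [CompleteSpace A]

def spCLM (b : Module.Basis (Finset (Fin m)) ℂ A) : A →L[ℂ] ℂ :=
  haveI : FiniteDimensional ℂ A := Module.Finite.of_basis b
  LinearMap.toContinuousLinearMap ((Finsupp.lapply ∅).comp b.repr.toLinearMap)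

lemma spCLM_apply (b : Module.Basis (Finset (Fin m)) ℂ A) (a : A) : spCLM b a = scalarPart b a := rfl

def conjCLM (b : Module.Basis (Finset (Fin m)) ℂ A) : A →L[ℝ] A :=
  haveI : FiniteDimensional ℂ A := Module.Finite.of_basis b
  haveI : FiniteDimensional ℝ A := Module.Finite.trans (R := ℝ) ℂ A
  LinearMap.toContinuousLinearMap (conjL b)

lemma conjCLM_apply (b : Module.Basis (Finset (Fin m)) ℂ A) (a : A) : conjCLM b a = cliffConj b a := rfl

def Tb (b : Module.Basis (Finset (Fin m)) ℂ A) (u : A) : A →L[ℂ] ℂ :=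
  (spCLM b).comp (ContinuousLinearMap.mul ℂ A (cliffConj b u))

lemma Tb_apply (b : Module.Basis (Finset (Fin m)) ℂ A) (u v : A) :
    Tb b u v = scalarPart b (cliffConj b u * v) := rfl

def TLb (b : Module.Basis (Finset (Fin m)) ℂ A) (w : A) : A →L[ℝ] ℂ :=
  ((spCLM b).restrictScalars ℝ).comp
    ((((ContinuousLinearMap.mul ℂ A).flip w).restrictScalars ℝ).comp (conjCLM b))

lemma TLb_apply (b : Module.Basis (Finset (Fin m)) ℂ A) (w u : A) : TLb b w u = Tb b u w := rfl

omit [CompleteSpace A] in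
lemma scalarPart_smul (b : Module.Basis (Finset (Fin m)) ℂ A) (μ : ℂ) (a : A) :
    scalarPart b (μ • a) = μ * scalarPart b a := by
  unfold scalarPart; rw [_root_.map_smul]; rfl

lemma Tb_smul_left (b : Module.Basis (Finset (Fin m)) ℂ A) (μ : ℂ) (u v : A) :
    Tb b (μ • u) v = (starRingEnd ℂ μ) * Tb b u v := by
  rw [Tb_apply, Tb_apply, cliffConj_smul, smul_mul_assoc, scalarPart_smul]

lemma Tb_cont (b : Module.Basis (Finset (Fin m)) ℂ A) :
    Continuous fun p : A × A => Tb b p.1 p.2 := by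
  have : (fun p : A × A => Tb b p.1 p.2)
      = fun p : A × A => spCLM b (cliffConj b p.1 * p.2) := rfl
  rw [this]
  have hc : Continuous fun p : A × A => cliffConj b p.1 := by
    show Continuous ((conjCLM b) ∘ Prod.fst)
    exact (conjCLM b).continuous.comp continuous_fst
  exact (spCLM b).continuous.comp (hc.mul continuous_snd)

lemma Tb_bound (b : Module.Basis (Finset (Fin m)) ℂ A) (u v : A) :
    ‖Tb b u v‖ ≤ (‖spCLM b‖ * ‖conjCLM b‖) * (‖u‖ * ‖v‖) := by
  have h1 : ‖Tb b u v‖ ≤ ‖spCLM b‖ * ‖cliffConj b u * v‖ := (spCLM b).le_opNorm _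
  have h2 : ‖cliffConj b u * v‖ ≤ ‖cliffConj b u‖ * ‖v‖ := norm_mul_le _ _
  have h3 : ‖cliffConj b u‖ ≤ ‖conjCLM b‖ * ‖u‖ := (conjCLM b).le_opNorm u
  have h4 : (0:ℝ) ≤ ‖spCLM b‖ := norm_nonneg _
  have h5 : (0:ℝ) ≤ ‖v‖ := norm_nonneg _
  calc ‖Tb b u v‖ ≤ ‖spCLM b‖ * ‖cliffConj b u * v‖ := h1
    _ ≤ ‖spCLM b‖ * (‖cliffConj b u‖ * ‖v‖) := mul_le_mul_of_nonneg_left h2 h4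
    _ ≤ ‖spCLM b‖ * ((‖conjCLM b‖ * ‖u‖) * ‖v‖) :=
        mul_le_mul_of_nonneg_left (mul_le_mul_of_nonneg_right h3 h5) h4
    _ = (‖spCLM b‖ * ‖conjCLM b‖) * (‖u‖ * ‖v‖) := by ring

end AuxEig

/-- If `ψ ∈ L²(B(1), ℂ_m)` is a common eigenfunction of `G_c` (eigenvalue
`μ ∈ ℂ`) and of `Q P_c` (eigenvalue `λ ∈ ℝ`), and `∫_{B(1)} |ψ|² > 0`, then
`|μ|² = λ / c^m`. -/
theorem eigenvalue_relation {m : ℕ} (hm : 2 ≤ m) {A : Type*} [NormedRing A]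
    [NormedAlgebra ℂ A] [CompleteSpace A] (e : Fin m → A) (b : Module.Basis (Finset (Fin m)) ℂ A)
    (hA : IsCliffordAlgebra m A e b) {c : ℝ} (hc : 0 < c) (ψ : Em m → A)
    (hψ2 : MemLp ψ 2 (volume : Measure (Em m)))
    (hsupp : Function.support ψ ⊆ Metric.closedBall 0 1)
    (hψpos : 0 < (∫ x in Metric.closedBall (0 : Em m) 1, cliffNormSq b (ψ x)).re)
    (μ : ℂ) (lam : ℝ)
    (hGc : (fun x => Gc c ψ x) =ᵐ[(volume : Measure (Em m))] fun x => μ • ψ x)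
    (hQPc : (fun x => Set.indicator (Metric.closedBall (0 : Em m) 1) (Pc c ψ) x)
        =ᵐ[(volume : Measure (Em m))] fun x => lam • ψ x) :
    ‖μ‖ ^ 2 = lam / c ^ m := by
  classical
  set S1 : Set (Em m) := Metric.closedBall (0 : Em m) 1 with hS1def
  set Sc : Set (Em m) := Metric.closedBall (0 : Em m) c with hScdef
  set g : Em m → A := 𝓕 ψ with hgdef
  haveI : IsFiniteMeasure ((volume : Measure (Em m)).restrict S1) :=
    ⟨by rw [Measure.restrict_apply_univ]; exact measure_closedBall_lt_top⟩
  haveI : IsFiniteMeasure ((volume : Measure (Em m)).restrict Sc) :=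
    ⟨by rw [Measure.restrict_apply_univ]; exact measure_closedBall_lt_top⟩
  have hψ1 : Integrable ψ (volume : Measure (Em m)) := by
    rw [← integrableOn_iff_integrable_of_support_subset hsupp]
    exact (hψ2.restrict S1).integrable (by norm_num)
  have hψ1' : IntegrableOn ψ S1 (volume : Measure (Em m)) := hψ1.integrableOn
  set M : ℝ := ∫ x, ‖ψ x‖ with hMdef
  have hM0 : 0 ≤ M := integral_nonneg fun x => norm_nonneg _
  have hg_bound : ∀ w, ‖g w‖ ≤ M := fun w =>
    VectorFourier.norm_fourierIntegral_le_integral_norm _ _ _ _ _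
  have hg_cont : Continuous g :=
    VectorFourier.fourierIntegral_continuous Real.continuous_fourierChar
      (by exact continuous_inner) hψ1
  set E : Em m → Em m → ℂ :=
    fun ξ x => Complex.exp (((2 * π * ⟪ξ, x⟫ : ℝ) : ℂ) * Complex.I) with hEdef
  set K : Em m → Em m → ℂ :=
    fun x w => Complex.exp (((-2 * π * ⟪x, w⟫ : ℝ) : ℂ) * Complex.I) with hKdef
  have hE_norm : ∀ ξ x, ‖E ξ x‖ = 1 := fun ξ x => by
    rw [hEdef]; exact Complex.norm_exp_ofReal_mul_I _
  have hK_norm : ∀ x w, ‖K x w‖ = 1 := fun x w => by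
    rw [hKdef]; exact Complex.norm_exp_ofReal_mul_I _
  have hKE : ∀ ξ x, (starRingEnd ℂ) (K x ξ) = E ξ x := by
    intro ξ x
    rw [hKdef, hEdef, ← Complex.exp_conj]
    congr 1
    simp only [map_mul, Complex.conj_I, Complex.conj_ofReal, real_inner_comm x ξ]
    push_cast
    ring
  have hψ_zero : ∀ x ∉ S1, ψ x = 0 := by
    intro x hx
    by_contra h
    exact hx (hsupp (Function.mem_support.2 h))
  have hg_eq : ∀ w, g w = ∫ x in S1, K x w • ψ x := by
    intro w
    rw [hgdef, Real.fourier_eq']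
    exact (setIntegral_eq_integral_of_forall_compl_eq_zero fun x hx => by
      rw [hψ_zero x hx, smul_zero]).symm
  have hPc : ∀ x, Pc c ψ x = ∫ ξ in Sc, E ξ x • g ξ := fun x => rfl
  have hEcont : Continuous fun p : Em m × Em m => E p.1 p.2 := by
    apply Complex.continuous_exp.comp
    apply Continuous.mul ?_ continuous_const
    exact Complex.continuous_ofReal.comp (continuous_const.mul continuous_inner)
  set N : ℂ := ∫ x in S1, Tb b (ψ x) (ψ x) with hNdef
  -- identify N with the hypothesis integral
  have hNN : (∫ x in S1, cliffNormSq b (ψ x)) = N := by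
    refine integral_congr_ae (Filter.Eventually.of_forall fun x => ?_)
    dsimp only
    rw [Tb_apply]; rfl
  have hNre : 0 < N.re := by rwa [hNN] at hψpos
  have hN0 : N ≠ 0 := fun h => by simp [h] at hNre
  -- Step B : LHS = lam * N
  have keyB : (∫ x in S1, Tb b (ψ x) (Pc c ψ x)) = (lam : ℂ) * N := by
    have h1 : (∫ x in S1, Tb b (ψ x) (Pc c ψ x))
        = ∫ x in S1, Tb b (ψ x) (Set.indicator S1 (Pc c ψ) x) := by
      refine (setIntegral_congr_fun measurableSet_closedBall fun x hx => ?_).symm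
      rw [Set.indicator_of_mem hx]
    rw [h1]
    have h2 : (fun x => Tb b (ψ x) (Set.indicator S1 (Pc c ψ) x))
        =ᵐ[(volume : Measure (Em m)).restrict S1] fun x => Tb b (ψ x) (lam • ψ x) :=
      (ae_restrict_of_ae hQPc).mono fun x hx => by dsimp only at hx ⊢; rw [hx]
    rw [integral_congr_ae h2]
    have h3 : ∀ x, Tb b (ψ x) (lam • ψ x) = (lam : ℂ) * Tb b (ψ x) (ψ x) := fun x => by
      rw [(Tb b (ψ x)).map_smul_of_tower lam, Complex.real_smul]
    simp_rw [h3]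
    rw [integral_const_mul]
  -- Step A : LHS = ∫_{Sc} T(g ξ)(g ξ)
  have hKcont : ∀ ξ, Continuous fun x => K x ξ := by
    intro ξ
    rw [hKdef]
    apply Complex.continuous_exp.comp
    apply Continuous.mul ?_ continuous_const
    exact Complex.continuous_ofReal.comp
      (continuous_const.mul (continuous_id.inner continuous_const))
  have hKψint : ∀ ξ, Integrable (fun x => K x ξ • ψ x)
      ((volume : Measure (Em m)).restrict S1) := by
    intro ξ
    refine Integrable.mono' hψ1'.norm
      (((hKcont ξ).aestronglyMeasurable).smul hψ1'.aestronglyMeasurable)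
      (Filter.Eventually.of_forall fun x => ?_)
    rw [norm_smul, hK_norm, one_mul]
  
  -- Step A
  have hA1 : ∀ x, Tb b (ψ x) (Pc c ψ x) = ∫ ξ in Sc, E ξ x * Tb b (ψ x) (g ξ) := by
    intro x
    have hint : IntegrableOn (fun ξ => E ξ x • g ξ) Sc (volume : Measure (Em m)) := by
      apply ContinuousOn.integrableOn_compact (isCompact_closedBall _ _)
      exact ((hEcont.comp (continuous_id.prodMk continuous_const)).smul hg_cont).continuousOn
    rw [hPc x, ← ContinuousLinearMap.integral_comp_comm (Tb b (ψ x)) hint]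
    refine integral_congr_ae (Filter.Eventually.of_forall fun ξ => ?_)
    dsimp only
    rw [(Tb b (ψ x)).map_smul, smul_eq_mul]
  have hA3 : ∀ ξ, (∫ x in S1, E ξ x * Tb b (ψ x) (g ξ)) = Tb b (g ξ) (g ξ) := by
    intro ξ
    have e1 : ∀ x, E ξ x * Tb b (ψ x) (g ξ) = TLb b (g ξ) (K x ξ • ψ x) := by
      intro x
      rw [TLb_apply, Tb_smul_left, hKE]
    simp_rw [e1]
    rw [ContinuousLinearMap.integral_comp_comm (TLb b (g ξ)) (hKψint ξ), ← hg_eq ξ, TLb_apply]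
  have hFint : Integrable (Function.uncurry fun x ξ => E ξ x * Tb b (ψ x) (g ξ))
      (((volume : Measure (Em m)).restrict S1).prod
        ((volume : Measure (Em m)).restrict Sc)) := by
    have hmeas : AEStronglyMeasurable (Function.uncurry fun x ξ => E ξ x * Tb b (ψ x) (g ξ))
        (((volume : Measure (Em m)).restrict S1).prod
          ((volume : Measure (Em m)).restrict Sc)) := by
      have huncur : (Function.uncurry fun x ξ => E ξ x * Tb b (ψ x) (g ξ))
          = fun p : Em m × Em m => E p.2 p.1 * Tb b (ψ p.1) (g p.2) := rfl
      rw [huncur]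
      apply AEStronglyMeasurable.mul
      · exact (hEcont.comp (continuous_snd.prodMk continuous_fst)).aestronglyMeasurable
      · have h : (fun p : Em m × Em m => Tb b (ψ p.1) (g p.2))
            = (fun q : A × A => Tb b q.1 q.2) ∘ fun p : Em m × Em m => (ψ p.1, g p.2) := rfl
        rw [h]
        exact (Tb_cont b).comp_aestronglyMeasurable
          ((hψ2.aestronglyMeasurable.restrict.comp_fst).prodMk
            (hg_cont.aestronglyMeasurable.restrict.comp_snd))
    refine Integrable.mono'
      (g := fun p : Em m × Em m => (((‖spCLM b‖ * ‖conjCLM b‖) * M) * ‖ψ p.1‖) * 1) ?_ hmeas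
      (Filter.Eventually.of_forall fun p => ?_)
    · exact Integrable.mul_prod ((hψ1'.norm).const_mul _) (integrable_const 1)
    · rw [mul_one]
      have hC : (0:ℝ) ≤ ‖spCLM b‖ * ‖conjCLM b‖ :=
        mul_nonneg (norm_nonneg _) (norm_nonneg _)
      calc ‖Function.uncurry (fun x ξ => E ξ x * Tb b (ψ x) (g ξ)) p‖
          = ‖E p.2 p.1‖ * ‖Tb b (ψ p.1) (g p.2)‖ := norm_mul _ _
        _ = ‖Tb b (ψ p.1) (g p.2)‖ := by rw [hE_norm, one_mul]
        _ ≤ (‖spCLM b‖ * ‖conjCLM b‖) * (‖ψ p.1‖ * ‖g p.2‖) := Tb_bound b _ _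
        _ ≤ (‖spCLM b‖ * ‖conjCLM b‖) * (‖ψ p.1‖ * M) := by
            exact mul_le_mul_of_nonneg_left
              (mul_le_mul_of_nonneg_left (hg_bound p.2) (norm_nonneg _)) hC
        _ = ((‖spCLM b‖ * ‖conjCLM b‖) * M) * ‖ψ p.1‖ := by ring
  have keyA : (∫ x in S1, Tb b (ψ x) (Pc c ψ x)) = ∫ ξ in Sc, Tb b (g ξ) (g ξ) := by
    simp_rw [hA1]
    rw [integral_integral_swap hFint]
    exact integral_congr_ae (Filter.Eventually.of_forall fun ξ => by dsimp only; rw [hA3 ξ])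
  
  -- Step C : scaling
  have hsmulset : c • S1 = Sc := by
    rw [hS1def, hScdef, smul_closedBall c (0 : Em m) zero_le_one, smul_zero,
      Real.norm_eq_abs, abs_of_pos hc, mul_one]
  have hscale := Measure.setIntegral_comp_smul_of_pos volume
    (fun ξ => Tb b (g ξ) (g ξ)) S1 hc
  rw [hsmulset, finrank_euclideanSpace_fin] at hscale
  have keyC : (∫ ξ in Sc, Tb b (g ξ) (g ξ))
      = (c ^ m : ℝ) • ∫ z in S1, Tb b (g (c • z)) (g (c • z)) := by
    rw [hscale, smul_inv_smul₀ (pow_ne_zero m hc.ne')]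
  -- Step D : symmetry under negation
  have keyD : (∫ z in S1, Tb b (g (c • z)) (g (c • z)))
      = ∫ z in S1, Tb b (g (-(c • z))) (g (-(c • z))) := by
    have hind : ∀ z : Em m,
        Set.indicator S1 (fun w => Tb b (g (-(c • w))) (g (-(c • w)))) (-z)
          = Set.indicator S1 (fun w => Tb b (g (c • w)) (g (c • w))) z := by
      intro z
      by_cases hz : z ∈ S1
      · have hz' : -z ∈ S1 := by
          rw [hS1def, mem_closedBall_zero_iff] at hz ⊢
          rwa [norm_neg]
        rw [Set.indicator_of_mem hz' , Set.indicator_of_mem hz, smul_neg, neg_neg]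
      · have hz' : -z ∉ S1 := fun h => hz (by
          rw [hS1def, mem_closedBall_zero_iff] at h ⊢
          rwa [norm_neg] at h)
        rw [Set.indicator_of_notMem hz', Set.indicator_of_notMem hz]
    calc (∫ z in S1, Tb b (g (c • z)) (g (c • z)))
        = ∫ z, Set.indicator S1 (fun w => Tb b (g (c • w)) (g (c • w))) z :=
          (integral_indicator measurableSet_closedBall).symm
      _ = ∫ z, Set.indicator S1 (fun w => Tb b (g (-(c • w))) (g (-(c • w)))) (-z) := by
          refine integral_congr_ae (Filter.Eventually.of_forall fun z => ?_)
          dsimp only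
          rw [hind z]
      _ = ∫ z, Set.indicator S1 (fun w => Tb b (g (-(c • w))) (g (-(c • w)))) z :=
          integral_neg_eq_self _ _
      _ = ∫ z in S1, Tb b (g (-(c • z))) (g (-(c • z))) :=
          integral_indicator measurableSet_closedBall
  -- Step E : identify with Gc
  have hGz : ∀ z ∈ S1, g (-(c • z)) = Gc c ψ z := by
    intro z hz
    have h1 : Gc c ψ z = ∫ y in S1,
        Complex.exp (((2 * π * c * ⟪z, y⟫ : ℝ) : ℂ) * Complex.I) • ψ y := by
      rw [Gc, Set.indicator_of_mem hz]
    rw [h1, hg_eq (-(c • z))]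
    refine integral_congr_ae (Filter.Eventually.of_forall fun y => ?_)
    dsimp only
    have hsc : K y (-(c • z))
        = Complex.exp (((2 * π * c * ⟪z, y⟫ : ℝ) : ℂ) * Complex.I) := by
      simp only [hKdef]
      congr 1
      congr 1
      rw [Complex.ofReal_inj, inner_neg_right, real_inner_smul_right, real_inner_comm z y]
      ring
    rw [hsc]
  have keyE : (∫ z in S1, Tb b (g (-(c • z))) (g (-(c • z))))
      = ∫ z in S1, Tb b (Gc c ψ z) (Gc c ψ z) := by
    refine setIntegral_congr_fun measurableSet_closedBall fun z hz => ?_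
    rw [hGz z hz]
  -- Step F : use the Gc eigenvalue equation
  have keyF : (∫ z in S1, Tb b (Gc c ψ z) (Gc c ψ z))
      = ((‖μ‖ ^ 2 : ℝ) : ℂ) * N := by
    have h2 : (fun z => Tb b (Gc c ψ z) (Gc c ψ z))
        =ᵐ[(volume : Measure (Em m)).restrict S1]
          fun z => Tb b (μ • ψ z) (μ • ψ z) :=
      (ae_restrict_of_ae hGc).mono fun z hz => by dsimp only at hz ⊢; rw [hz]
    rw [integral_congr_ae h2]
    have h3 : ∀ z, Tb b (μ • ψ z) (μ • ψ z) = ((‖μ‖ ^ 2 : ℝ) : ℂ) * Tb b (ψ z) (ψ z) := by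
      intro z
      rw [(Tb b (μ • ψ z)).map_smul, smul_eq_mul, Tb_smul_left, ← mul_assoc,
        Complex.mul_conj, Complex.normSq_eq_norm_sq]
    simp_rw [h3]
    rw [integral_const_mul]
  -- Final assembly
  have final : (lam : ℂ) * N = ((c ^ m * ‖μ‖ ^ 2 : ℝ) : ℂ) * N := by
    rw [← keyB, keyA, keyC, keyD, keyE, keyF, Complex.real_smul]
    push_cast
    ring
  have hcan : (lam : ℂ) = ((c ^ m * ‖μ‖ ^ 2 : ℝ) : ℂ) := mul_right_cancel₀ hN0 final
  have hreal : lam = c ^ m * ‖μ‖ ^ 2 := by exact_mod_cast hcan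
  rw [eq_div_iff (pow_ne_zero m hc.ne')]
  linarith
end
end
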